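/- (Consequence of Theorem 2 and Lemma 1: the conventional CFL condition guarantees positive definiteness of the probability matrix.) For the concrete 3-D FDTD-Q region, let Δt be a real number with 0 < Δt < 2/((2*ℏ/m) * (1/Δx^2 + 1/Δy^2 + 1/Δz^2) + (1/ℏ) * (max over p ∈ 𝒩 of |U p|)). Then the block matrix 𝒫 := Matrix.fromBlocks V'' (-(Δt/(2*ℏ)) • H) (-(Δt/(2*ℏ)) • H) V'', indexed by 𝒩 ⊕ 𝒩, is positive definite. -/

import Mathlib

open Matrix Kronecker

noncomputable section

abbrev Node (nx ny nz : ℕ) := Fin (nz+1) × Fin (ny+1) × Fin (nx+1)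

/-- Triple Kronecker product with indices identified with `α × β × γ`. -/
def kron3 {α β γ : Type*} (A : Matrix α α ℝ) (B : Matrix β β ℝ) (C : Matrix γ γ ℝ) :
    Matrix (α × β × γ) (α × β × γ) ℝ :=
  Matrix.reindex (Equiv.prodAssoc α β γ) (Equiv.prodAssoc α β γ) (A ⊗ₖ B ⊗ₖ C)

/-- 1-D finite-difference matrix `W p`: `-1` at `j = castSucc i`, `+1` at `j = succ i`. -/
def Wmat (p : ℕ) : Matrix (Fin p) (Fin (p+1)) ℝ :=
  Matrix.of fun i j => if j = Fin.castSucc i then (-1 : ℝ) else if j = Fin.succ i then 1 else 0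

/-- 1-D stiffness matrix `A p = (W p)ᵀ * W p`. -/
def Amat (p : ℕ) : Matrix (Fin (p+1)) (Fin (p+1)) ℝ := (Wmat p)ᵀ * Wmat p

/-- Diagonal matrix with first and last entries `1/2`, all others `1`. -/
def Itl (p : ℕ) : Matrix (Fin (p+1)) (Fin (p+1)) ℝ :=
  Matrix.diagonal (fun i => if i = 0 ∨ i = Fin.last p then (1:ℝ)/2 else 1)

/-- Secondary-cell volume matrix `V''`. -/
def Vsec (nx ny nz : ℕ) (Δx Δy Δz : ℝ) : Matrix (Node nx ny nz) (Node nx ny nz) ℝ :=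
  Matrix.diagonal (fun p =>
    Δx * Δy * Δz * Itl nz p.1 p.1 * Itl ny p.2.1 p.2.1 * Itl nx p.2.2 p.2.2)

/-- The FDTD-Q Hamiltonian matrix `H`. -/
def Hmat (nx ny nz : ℕ) (ℏ m Δx Δy Δz : ℝ) (U : Node nx ny nz → ℝ) :
    Matrix (Node nx ny nz) (Node nx ny nz) ℝ :=
  (ℏ^2/(2*m)) • ((Δy*Δz/Δx) • kron3 (Itl nz) (Itl ny) (Amat nx)
    + (Δx*Δz/Δy) • kron3 (Itl nz) (Amat ny) (Itl nx)
    + (Δx*Δy/Δz) • kron3 (Amat nz) (Itl ny) (Itl nx))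
  + Vsec nx ny nz Δx Δy Δz * Matrix.diagonal U

/-- Diagonal matrix of reciprocal square roots of the diagonal of `V''`. -/
def Dmat (nx ny nz : ℕ) (Δx Δy Δz : ℝ) : Matrix (Node nx ny nz) (Node nx ny nz) ℝ :=
  Matrix.diagonal (fun p => 1 / Real.sqrt (Vsec nx ny nz Δx Δy Δz p p))

/-- The scaled Hamiltonian `Σ = (1/ℏ) • (D * H * D)`. -/
def Sgm (nx ny nz : ℕ) (ℏ m Δx Δy Δz : ℝ) (U : Node nx ny nz → ℝ) :
    Matrix (Node nx ny nz) (Node nx ny nz) ℝ :=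
  (1/ℏ) • (Dmat nx ny nz Δx Δy Δz * Hmat nx ny nz ℏ m Δx Δy Δz U * Dmat nx ny nz Δx Δy Δz)

/-!
Write `s = Δt / (2ℏ)` and `z = (x, y)`. Then
`2 zᵀ 𝒫 z = (x + y)ᵀ (V'' - s H) (x + y) + (x - y)ᵀ (V'' + s H) (x - y)`,
so it suffices that `V'' ± s H` are positive definite. Both follow from the Loewner bounds
`-K V'' ≤ H ≤ K V''` with `K = 2ℏ²/m (1/Δx² + 1/Δy² + 1/Δz²) + max |U|`, since `s K < 1` is
exactly the CFL condition: then `V'' ± s H = (1 - s K) V'' + s (K V'' ± H)`. The kinetic part of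
the bound tensors the one-dimensional inequalities `0 ≤ A p ≤ 4 Ĩ p` (from
`(a - b)² ≤ 2a² + 2b²`) with `Ĩ ⊗ Ĩ`; the potential part is diagonal.
-/

namespace Matrix

theorem posDef_fromBlocks_of_posDef_add_of_posDef_sub {n : Type*} [Fintype n]
    {A B : Matrix n n ℝ} (hadd : (A + B).PosDef) (hsub : (A - B).PosDef) :
    (fromBlocks A B B A).PosDef := by
  have hA : A.IsHermitian := by
    simpa [← two_smul ℝ A, IsHermitian, conjTranspose_smul] using
      (hadd.isHermitian.add hsub.isHermitian).eq
  have hB : B.IsHermitian := by simpa using hadd.isHermitian.sub hA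
  refine .of_dotProduct_mulVec_pos (hA.fromBlocks hB.eq hA) fun z hz => ?_
  obtain ⟨x, y, rfl⟩ : ∃ x y, z = Sum.elim x y := ⟨_, _, (Sum.elim_comp_inl_inr z).symm⟩
  have hpos : 0 < (x + y) ⬝ᵥ (A + B) *ᵥ (x + y) + (x - y) ⬝ᵥ (A - B) *ᵥ (x - y) := by
    have hp := hadd.posSemidef.dotProduct_mulVec_nonneg (x + y)
    have hm := hsub.posSemidef.dotProduct_mulVec_nonneg (x - y)
    by_cases hxy : x + y = 0
    · have hxy' : x - y ≠ 0 := by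
        rintro hx
        obtain rfl := sub_eq_zero.mp hx
        have hx0 : x = 0 := funext fun i => by simpa using congrFun hxy i
        exact hz (by simp [hx0])
      have := hsub.dotProduct_mulVec_pos hxy'
      rw [star_trivial] at hp hm this
      linarith
    · have := hadd.dotProduct_mulVec_pos hxy
      rw [star_trivial] at hp hm this
      linarith
  simp only [star_trivial, fromBlocks_mulVec, sumElim_dotProduct_sumElim, Sum.elim_comp_inl,
    Sum.elim_comp_inr]
  simp only [add_mulVec, sub_mulVec, mulVec_add, mulVec_sub, dotProduct_add, dotProduct_sub,
    add_dotProduct, sub_dotProduct] at hpos ⊢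
  linarith

theorem PosDef.sub_smul_of_posSemidef_smul_sub {n : Type*} {V H : Matrix n n ℝ} {K s : ℝ}
    (hV : V.PosDef) (hH : (K • V - H).PosSemidef) (hs : 0 ≤ s) (hsK : s * K < 1) :
    (V - s • H).PosDef := by
  have h : V - s • H = (1 - s * K) • V + s • (K • V - H) := by module
  rw [h]
  exact (hV.smul (by linarith)).add_posSemidef (hH.smul hs)

theorem posDef_fromBlocks_neg_smul {n : Type*} [Fintype n] {V H : Matrix n n ℝ} {K s : ℝ}
    (hV : V.PosDef) (hle : (K • V - H).PosSemidef) (hge : (K • V + H).PosSemidef) (hs : 0 ≤ s)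
    (hsK : s * K < 1) : (fromBlocks V (-s • H) (-s • H) V).PosDef := by
  refine posDef_fromBlocks_of_posDef_add_of_posDef_sub ?_ ?_
  · simpa [neg_smul, ← sub_eq_add_neg] using hV.sub_smul_of_posSemidef_smul_sub hle hs hsK
  · simpa [neg_smul] using
      hV.sub_smul_of_posSemidef_smul_sub (H := -H) (by simpa using hge) hs hsK

theorem posSemidef_smul_diagonal_sub_diagonal_mul_diagonal {n : Type*} [Fintype n]
    [DecidableEq n] {d U : n → ℝ} {c : ℝ} (hd : (diagonal d).PosSemidef) (hU : ∀ i, |U i| ≤ c) :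
    (c • diagonal d - diagonal d * diagonal U).PosSemidef := by
  rw [← diagonal_smul, diagonal_mul_diagonal, diagonal_sub]
  refine .diagonal fun i => ?_
  have := mul_nonneg (posSemidef_diagonal_iff.mp hd i)
    (sub_nonneg.mpr ((le_abs_self (U i)).trans (hU i)))
  simp only [Pi.zero_apply, Pi.smul_apply, smul_eq_mul]
  linarith

variable {α β γ : Type*} [Fintype α] [Fintype β] [Fintype γ]

theorem PosSemidef.kron3 {A : Matrix α α ℝ} {B : Matrix β β ℝ} {C : Matrix γ γ ℝ}
    (hA : A.PosSemidef) (hB : B.PosSemidef) (hC : C.PosSemidef) : (kron3 A B C).PosSemidef :=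
  ((hA.kronecker hB).kronecker hC).submatrix _

end Matrix

theorem kron3_apply {α β γ : Type*} (A : Matrix α α ℝ) (B : Matrix β β ℝ) (C : Matrix γ γ ℝ)
    (p q : α × β × γ) : kron3 A B C p q = A p.1 q.1 * B p.2.1 q.2.1 * C p.2.2 q.2.2 :=
  rfl

section OneDim

variable (p : ℕ)

theorem Itl_apply_self_pos (i : Fin (p + 1)) : 0 < Itl p i i := by
  simp only [Itl, diagonal_apply_eq]
  split_ifs <;> norm_num

theorem Itl_posSemidef : (Itl p).PosSemidef :=
  .diagonal fun i => by dsimp only [Pi.zero_apply]; split_ifs <;> norm_num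

theorem Amat_posSemidef : (Amat p).PosSemidef :=
  posSemidef_conjTranspose_mul_self (Wmat p)

theorem Wmat_mulVec (x : Fin (p + 1) → ℝ) (i : Fin p) :
    (Wmat p *ᵥ x) i = x i.succ - x i.castSucc := by
  have key : ∀ j, Wmat p i j * x j
      = (if j = i.succ then x j else 0) - (if j = i.castSucc then x j else 0) := by
    intro j
    have := (Fin.castSucc_lt_succ (i := i)).ne'
    by_cases h1 : j = i.castSucc <;> by_cases h2 : j = i.succ <;> simp_all [Wmat]
  simp only [mulVec, dotProduct, key, Finset.sum_sub_distrib, Finset.sum_ite_eq',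
    Finset.mem_univ, if_true]

theorem dotProduct_Amat_mulVec (x : Fin (p + 1) → ℝ) :
    x ⬝ᵥ Amat p *ᵥ x = ∑ i : Fin p, (x i.succ - x i.castSucc) ^ 2 := by
  rw [Amat, ← mulVec_mulVec, dotProduct_mulVec, vecMul_transpose]
  simp [dotProduct, Wmat_mulVec, sq]

theorem sum_sq_sub_le_dotProduct_Itl_mulVec (x : Fin (p + 1) → ℝ) :
    ∑ j, x j ^ 2 - (x 0 ^ 2 + x (Fin.last p) ^ 2) / 2 ≤ x ⬝ᵥ Itl p *ᵥ x := by
  have hsum : ∑ j, x j ^ 2 - (x 0 ^ 2 + x (Fin.last p) ^ 2) / 2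
      = ∑ j, (x j ^ 2 - (if j = 0 then x j ^ 2 else 0) / 2
          - (if j = Fin.last p then x j ^ 2 else 0) / 2) := by
    simp only [Finset.sum_sub_distrib, ← Finset.sum_div, Finset.sum_ite_eq', Finset.mem_univ,
      if_true]
    ring
  rw [hsum]
  simp only [Itl, dotProduct, mulVec_diagonal]
  refine Finset.sum_le_sum fun j _ => ?_
  split_ifs <;> first | (exfalso; tauto) | nlinarith [sq_nonneg (x j)]

theorem posSemidef_four_smul_Itl_sub_Amat : ((4 : ℝ) • Itl p - Amat p).PosSemidef := by
  refine .of_dotProduct_mulVec_nonneg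
    (((Itl_posSemidef p).smul (by norm_num)).isHermitian.sub (Amat_posSemidef p).isHermitian)
    fun x => ?_
  rw [star_trivial, sub_mulVec, dotProduct_sub, smul_mulVec, dotProduct_smul, smul_eq_mul,
    sub_nonneg, dotProduct_Amat_mulVec]
  calc ∑ i : Fin p, (x i.succ - x i.castSucc) ^ 2
      ≤ ∑ i : Fin p, (2 * x i.succ ^ 2 + 2 * x i.castSucc ^ 2) :=
        Finset.sum_le_sum fun i _ => by nlinarith [sq_nonneg (x i.succ + x i.castSucc)]
    _ = 4 * (∑ j, x j ^ 2 - (x 0 ^ 2 + x (Fin.last p) ^ 2) / 2) := by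
        rw [Finset.sum_add_distrib, ← Finset.mul_sum, ← Finset.mul_sum]
        linarith [Fin.sum_univ_succ (fun j => x j ^ 2), Fin.sum_univ_castSucc (fun j => x j ^ 2)]
    _ ≤ 4 * (x ⬝ᵥ Itl p *ᵥ x) := by
        linarith [sum_sq_sub_le_dotProduct_Itl_mulVec p x]

end OneDim

section Grid

variable (nx ny nz : ℕ) (ℏ m Δx Δy Δz : ℝ)

def kineticMat : Matrix (Node nx ny nz) (Node nx ny nz) ℝ :=
  (ℏ^2/(2*m)) • ((Δy*Δz/Δx) • kron3 (Itl nz) (Itl ny) (Amat nx)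
    + (Δx*Δz/Δy) • kron3 (Itl nz) (Amat ny) (Itl nx)
    + (Δx*Δy/Δz) • kron3 (Amat nz) (Itl ny) (Itl nx))

theorem Hmat_eq_kineticMat_add (U : Node nx ny nz → ℝ) :
    Hmat nx ny nz ℏ m Δx Δy Δz U
      = kineticMat nx ny nz ℏ m Δx Δy Δz + Vsec nx ny nz Δx Δy Δz * diagonal U :=
  rfl

theorem Vsec_eq_smul_kron3 :
    Vsec nx ny nz Δx Δy Δz = (Δx*Δy*Δz) • kron3 (Itl nz) (Itl ny) (Itl nx) := by
  simp only [Vsec, kron3, Itl, diagonal_kronecker_diagonal, reindex_apply,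
    submatrix_diagonal_equiv, ← diagonal_smul]
  congr 1 with ⟨k, j, i⟩
  simp only [Function.comp_apply, Equiv.prodAssoc_symm_apply, Pi.smul_apply, smul_eq_mul,
    diagonal_apply_eq]
  ring

variable {Δx Δy Δz}

theorem Vsec_posDef (hΔx : 0 < Δx) (hΔy : 0 < Δy) (hΔz : 0 < Δz) :
    (Vsec nx ny nz Δx Δy Δz).PosDef :=
  posDef_diagonal_iff.mpr fun p => by
    have := Itl_apply_self_pos nz p.1
    have := Itl_apply_self_pos ny p.2.1
    have := Itl_apply_self_pos nx p.2.2
    positivity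

variable {m}

theorem kineticMat_posSemidef (hm : 0 < m) (hΔx : 0 < Δx) (hΔy : 0 < Δy) (hΔz : 0 < Δz) :
    (kineticMat nx ny nz ℏ m Δx Δy Δz).PosSemidef := by
  have hI := Itl_posSemidef
  have hA := Amat_posSemidef
  exact .smul (.add (.add (.smul ((hI nz).kron3 (hI ny) (hA nx)) (by positivity))
    (.smul ((hI nz).kron3 (hA ny) (hI nx)) (by positivity)))
    (.smul ((hA nz).kron3 (hI ny) (hI nx)) (by positivity))) (by positivity)

theorem posSemidef_smul_Vsec_sub_kineticMat (hm : 0 < m) (hΔx : 0 < Δx) (hΔy : 0 < Δy)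
    (hΔz : 0 < Δz) :
    ((2*ℏ^2/m * (1/Δx^2 + 1/Δy^2 + 1/Δz^2)) • Vsec nx ny nz Δx Δy Δz
      - kineticMat nx ny nz ℏ m Δx Δy Δz).PosSemidef := by
  have hI := Itl_posSemidef
  have hB := posSemidef_four_smul_Itl_sub_Amat
  have h : (2*ℏ^2/m * (1/Δx^2 + 1/Δy^2 + 1/Δz^2)) • Vsec nx ny nz Δx Δy Δz
        - kineticMat nx ny nz ℏ m Δx Δy Δz
      = (ℏ^2/(2*m)) • ((Δy*Δz/Δx) • kron3 (Itl nz) (Itl ny) ((4 : ℝ) • Itl nx - Amat nx)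
        + (Δx*Δz/Δy) • kron3 (Itl nz) ((4 : ℝ) • Itl ny - Amat ny) (Itl nx)
        + (Δx*Δy/Δz) • kron3 ((4 : ℝ) • Itl nz - Amat nz) (Itl ny) (Itl nx)) := by
    ext p q
    simp only [Vsec_eq_smul_kron3, kineticMat, Matrix.sub_apply, Matrix.add_apply,
      Matrix.smul_apply, kron3_apply, smul_eq_mul]
    field_simp
    ring
  rw [h]
  exact .smul (.add (.add (.smul ((hI nz).kron3 (hI ny) (hB nx)) (by positivity))
    (.smul ((hI nz).kron3 (hB ny) (hI nx)) (by positivity)))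
    (.smul ((hB nz).kron3 (hI ny) (hI nx)) (by positivity))) (by positivity)

end Grid

section Hamiltonian

variable (nx ny nz : ℕ) {ℏ m Δx Δy Δz : ℝ} {U : Node nx ny nz → ℝ} {c : ℝ}

theorem posSemidef_smul_Vsec_sub_Hmat (hm : 0 < m) (hΔx : 0 < Δx) (hΔy : 0 < Δy)
    (hΔz : 0 < Δz) (hU : ∀ p, |U p| ≤ c) :
    ((2*ℏ^2/m * (1/Δx^2 + 1/Δy^2 + 1/Δz^2) + c) • Vsec nx ny nz Δx Δy Δz
      - Hmat nx ny nz ℏ m Δx Δy Δz U).PosSemidef := by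
  rw [Hmat_eq_kineticMat_add, add_smul, add_sub_add_comm]
  exact (posSemidef_smul_Vsec_sub_kineticMat nx ny nz ℏ hm hΔx hΔy hΔz).add
    (posSemidef_smul_diagonal_sub_diagonal_mul_diagonal
      (Vsec_posDef nx ny nz hΔx hΔy hΔz).posSemidef hU)

theorem posSemidef_smul_Vsec_add_Hmat (hm : 0 < m) (hΔx : 0 < Δx) (hΔy : 0 < Δy)
    (hΔz : 0 < Δz) (hU : ∀ p, |U p| ≤ c) :
    ((2*ℏ^2/m * (1/Δx^2 + 1/Δy^2 + 1/Δz^2) + c) • Vsec nx ny nz Δx Δy Δz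
      + Hmat nx ny nz ℏ m Δx Δy Δz U).PosSemidef := by
  have hV := (Vsec_posDef nx ny nz hΔx hΔy hΔz).posSemidef
  have hpot := posSemidef_smul_diagonal_sub_diagonal_mul_diagonal (U := -U) hV (by simpa using hU)
  have hneg : diagonal (-U) = -diagonal U := (diagonal_neg U).symm
  rw [hneg, mul_neg, sub_neg_eq_add] at hpot
  rw [Hmat_eq_kineticMat_add, add_smul, add_add_add_comm]
  exact ((hV.smul (by positivity)).add (kineticMat_posSemidef nx ny nz ℏ hm hΔx hΔy hΔz)).add hpot

end Hamiltonian

theorem fdtdq_conventional_CFL_implies_posdef_general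
    (nx ny nz : ℕ)
    (ℏ m Δx Δy Δz : ℝ) (hℏ : 0 < ℏ) (hm : 0 < m)
    (hΔx : 0 < Δx) (hΔy : 0 < Δy) (hΔz : 0 < Δz)
    (U : Node nx ny nz → ℝ)
    (Δt : ℝ) (hΔt : 0 < Δt)
    (hCFL : Δt < 2 / ((2*ℏ/m) * (1/Δx^2 + 1/Δy^2 + 1/Δz^2)
        + (1/ℏ) * (Finset.univ.sup' Finset.univ_nonempty
            (fun p : Node nx ny nz => |U p|)))) :
    (Matrix.fromBlocks (Vsec nx ny nz Δx Δy Δz)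
      (-(Δt/(2*ℏ)) • Hmat nx ny nz ℏ m Δx Δy Δz U)
      (-(Δt/(2*ℏ)) • Hmat nx ny nz ℏ m Δx Δy Δz U)
      (Vsec nx ny nz Δx Δy Δz)).PosDef := by
  set Umax := Finset.univ.sup' Finset.univ_nonempty fun p : Node nx ny nz => |U p|
  have hU : ∀ p, |U p| ≤ Umax := fun p => Finset.le_sup' (fun p => |U p|) (Finset.mem_univ p)
  have hUmax : 0 ≤ Umax := (abs_nonneg _).trans (hU (0, 0, 0))
  have hsK : Δt / (2*ℏ) * (2*ℏ^2/m * (1/Δx^2 + 1/Δy^2 + 1/Δz^2) + Umax) < 1 := by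
    have hc : 0 < (2*ℏ/m) * (1/Δx^2 + 1/Δy^2 + 1/Δz^2) + (1/ℏ) * Umax := by positivity
    rw [lt_div_iff₀ hc] at hCFL
    calc Δt / (2*ℏ) * (2*ℏ^2/m * (1/Δx^2 + 1/Δy^2 + 1/Δz^2) + Umax)
        = Δt * ((2*ℏ/m) * (1/Δx^2 + 1/Δy^2 + 1/Δz^2) + (1/ℏ) * Umax) / 2 := by
          field_simp
      _ < 1 := by linarith
  exact posDef_fromBlocks_neg_smul (Vsec_posDef nx ny nz hΔx hΔy hΔz)
    (posSemidef_smul_Vsec_sub_Hmat nx ny nz hm hΔx hΔy hΔz hU)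
    (posSemidef_smul_Vsec_add_Hmat nx ny nz hm hΔx hΔy hΔz hU) (by positivity) hsK

/-- Consequence of Theorem 2 and Lemma 1 of the paper: if the time step is below
the conventional CFL limit, then the FDTD-Q probability matrix `𝒫` is positive
definite. -/
theorem fdtdq_conventional_CFL_implies_posdef
    (nx ny nz : ℕ) (hnx : 0 < nx) (hny : 0 < ny) (hnz : 0 < nz)
    (ℏ m Δx Δy Δz : ℝ) (hℏ : 0 < ℏ) (hm : 0 < m)
    (hΔx : 0 < Δx) (hΔy : 0 < Δy) (hΔz : 0 < Δz)
    (U : Node nx ny nz → ℝ)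
    (Δt : ℝ) (hΔt : 0 < Δt)
    (hCFL : Δt < 2 / ((2*ℏ/m) * (1/Δx^2 + 1/Δy^2 + 1/Δz^2)
        + (1/ℏ) * (Finset.univ.sup' Finset.univ_nonempty
            (fun p : Node nx ny nz => |U p|)))) :
    (Matrix.fromBlocks (Vsec nx ny nz Δx Δy Δz)
      (-(Δt/(2*ℏ)) • Hmat nx ny nz ℏ m Δx Δy Δz U)
      (-(Δt/(2*ℏ)) • Hmat nx ny nz ℏ m Δx Δy Δz U)
      (Vsec nx ny nz Δx Δy Δz)).PosDef :=
  fdtdq_conventional_CFL_implies_posdef_general nx ny nz ℏ m Δx Δy Δz hℏ hm hΔx hΔy hΔz U Δt hΔt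
    hCFL

end
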